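/- arXiv:2511.05959 — 4 statements merged into one kernel-verified Lean document; each statement's English description precedes it below -/
import Mathlib

section
/- Fix β ∈ ℝ. Let r = r(m₁,m₂,m₃,m₄) be a nonzero r-matrix for the Lie superalgebra (C⁵₀+A) whose associated R-operator with respect to Ω_β satisfies the (modified) graded classical Yang–Baxter equation with some parameter ω ∈ ℝ. Then r is equivalent to one of the five representative r-matrices: r_i, r_ii, r_iii, r_iv(p) for some p ≠ 0, or r_v. (Theorem 6.1, existence part.) -/
noncomputable section

/-- The underlying supervector space `V = ℝ⁴`, with basis `T 0, T 1` even and `T 2, T 3` odd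
(corresponding to `T₁, T₂; T₃, T₄`). -/
abbrev V4 : Type := Fin 4 → ℝ

/-- The basis vectors `T₁, T₂, T₃, T₄` (zero-indexed). -/
def T (i : Fin 4) : V4 := Pi.single i 1

/-- The bilinear bracket of the Lie superalgebra `(C⁵₀+A)`, determined by
`[T₁,T₃] = −T₄`, `[T₃,T₁] = T₄`, `[T₁,T₄] = T₃`, `[T₄,T₁] = −T₃`,
`[T₃,T₃] = T₂`, `[T₄,T₄] = T₂`, all other brackets of basis vectors zero. -/
def brC5 (x y : V4) : V4 :=
  ![0, x 2 * y 2 + x 3 * y 3, x 0 * y 3 - x 3 * y 0, -(x 0 * y 2) + x 2 * y 0]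

/-- The even subspace `span{T₁,T₂}`. -/
def spanEven : Submodule ℝ V4 := Submodule.span ℝ {T 0, T 1}

/-- The odd subspace `span{T₃,T₄}`. -/
def spanOdd : Submodule ℝ V4 := Submodule.span ℝ {T 2, T 3}

/-- The general even super skew-symmetric r-matrix
`r(m₁,m₂,m₃,m₄) = m₁(T₁⊗T₂ − T₂⊗T₁) + m₂(T₃⊗T₄ + T₄⊗T₃) + m₃ T₃⊗T₃ + m₄ T₄⊗T₄ ∈ V⊗V`,
recorded by its coefficient matrix `r^{ab}`. -/
def rmat (m₁ m₂ m₃ m₄ : ℝ) : Matrix (Fin 4) (Fin 4) ℝ :=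
  !![0, m₁, 0, 0; -m₁, 0, 0, 0; 0, 0, m₃, m₂; 0, 0, m₂, m₄]

/-- The R-operator of `r(m₁,m₂,m₃,m₄)` with respect to `Ω_β`:
`R(T₁) = m₁T₁ − βm₁T₂`, `R(T₂) = −m₁T₂`, `R(T₃) = m₂T₃ + m₄T₄`, `R(T₄) = −m₃T₃ − m₂T₄`. -/
def Rop (β m₁ m₂ m₃ m₄ : ℝ) : V4 →ₗ[ℝ] V4 :=
  Matrix.toLin' !![m₁, 0, 0, 0; -(β*m₁), -m₁, 0, 0; 0, 0, m₂, -m₃; 0, 0, m₄, -m₂]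

/-- `R` satisfies the (modified) graded classical Yang–Baxter equation with parameter `ω`. -/
def SatGCYBE (R : V4 →ₗ[ℝ] V4) (ω : ℝ) : Prop :=
  ∀ x y : V4, brC5 (R x) (R y) - R (brC5 (R x) y + brC5 x (R y)) = ω • brC5 x y

/-- An automorphism of `(C⁵₀+A)`: a linear bijection preserving the parity subspaces and
the bracket. -/
def IsAuto (A : V4 →ₗ[ℝ] V4) : Prop :=
  Function.Bijective A ∧
  (∀ x ∈ spanEven, A x ∈ spanEven) ∧
  (∀ x ∈ spanOdd, A x ∈ spanOdd) ∧
  (∀ x y : V4, A (brC5 x y) = brC5 (A x) (A y))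

/-- `(A⊗A)` applied to an r-matrix in coefficient form:
`((A⊗A)r)^{cd} = Σ_{a,b} r^{ab} (A T_a)^c (A T_b)^d`. -/
def applyAA (A : V4 →ₗ[ℝ] V4) (r : Matrix (Fin 4) (Fin 4) ℝ) : Matrix (Fin 4) (Fin 4) ℝ :=
  Matrix.of fun c d => ∑ a : Fin 4, ∑ b : Fin 4, r a b * A (T a) c * A (T b) d

/-- Equivalence of r-matrices: `r ~ r′` iff `(A⊗A)(r′) = r` for some automorphism `A`. -/
def REquiv (r r' : Matrix (Fin 4) (Fin 4) ℝ) : Prop :=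
  ∃ A : V4 →ₗ[ℝ] V4, IsAuto A ∧ applyAA A r' = r

/-!
Evaluating the Yang–Baxter equation at pairs of odd basis vectors gives
`m₄² − m₃² + 4m₁m₂ = 0` and `m₁(m₄ − m₃) = m₂(m₃ + m₄)`, which force `m₁ = 0, m₄ = −m₃` or
`m₂ = 0, m₄ = m₃`. The maps `T₁ ↦ aT₁`, `T₂ ↦ (p² + q²)T₂`, `T₃ ↦ pT₃ + qT₄`, `T₄ ↦ a(pT₄ − qT₃)`
with `a = ±1`, `(p, q) ≠ 0` are automorphisms. With `q = 0` they rescale `(m₁, m₂)` by `ap²`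
and `(m₃, m₄)` by `p²`, which normalises the second family; with `a = 1` they multiply
`m₂ + i·m₄` in `r(0, m₂, −m₄, m₄)` by `(p + iq)²`, so a complex square root carries the first
family to `r_v`.
-/

lemma Rop_apply (β m₁ m₂ m₃ m₄ : ℝ) (x : V4) :
    Rop β m₁ m₂ m₃ m₄ x =
      ![m₁ * x 0, -(β * m₁) * x 0 - m₁ * x 1, m₂ * x 2 - m₃ * x 3, m₄ * x 2 - m₂ * x 3] := by
  funext i
  fin_cases i <;> simp [Rop, Matrix.toLin'_apply, Matrix.mulVec, dotProduct, Fin.sum_univ_four] <;>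
    ring

lemma SatGCYBE.Rop_constraints {β ω m₁ m₂ m₃ m₄ : ℝ} (hyb : SatGCYBE (Rop β m₁ m₂ m₃ m₄) ω) :
    m₄ ^ 2 - m₃ ^ 2 + 4 * m₁ * m₂ = 0 ∧ m₁ * (m₄ - m₃) = m₂ * (m₃ + m₄) := by
  have h₃₃ := congrFun (hyb (T 2) (T 2)) 1
  have h₄₄ := congrFun (hyb (T 3) (T 3)) 1
  have h₃₄ := congrFun (hyb (T 2) (T 3)) 1
  simp [Rop_apply, brC5, T] at h₃₃ h₄₄ h₃₄
  exact ⟨by linear_combination h₃₃ - h₄₄, by linear_combination h₃₄⟩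

lemma Rop_constraints_cases {m₁ m₂ m₃ m₄ : ℝ} (hE : m₄ ^ 2 - m₃ ^ 2 + 4 * m₁ * m₂ = 0)
    (hC : m₁ * (m₄ - m₃) = m₂ * (m₃ + m₄)) :
    (m₁ = 0 ∧ m₄ = -m₃) ∨ (m₂ = 0 ∧ m₄ = m₃) := by
  by_cases hm₁ : m₁ = 0
  · subst hm₁
    have : m₂ * (m₃ + m₄) = 0 := by linear_combination -hC
    rcases mul_eq_zero.mp this with rfl | h
    · have : (m₄ + m₃) * (m₄ - m₃) = 0 := by linear_combination hE
      rcases mul_eq_zero.mp this with h | h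
      · exact .inl ⟨rfl, by linarith⟩
      · exact .inr ⟨rfl, by linarith⟩
    · exact .inl ⟨rfl, by linarith⟩
  · -- eliminating `m₄ - m₃` between the two constraints leaves a positive multiple of `m₂`
    have key : m₂ * (4 * m₁ ^ 2 + (m₃ + m₄) ^ 2) = 0 := by
      linear_combination m₁ * hE - (m₄ + m₃) * hC
    have hm₂ : m₂ = 0 := by
      have : 0 < 4 * m₁ ^ 2 + (m₃ + m₄) ^ 2 := by positivity
      simpa [this.ne'] using key
    subst hm₂
    refine .inr ⟨rfl, ?_⟩
    have : m₁ * (m₄ - m₃) = 0 := by linear_combination hC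
    have := (mul_eq_zero.mp this).resolve_left hm₁
    linarith

def autoMat (a p q : ℝ) : Matrix (Fin 4) (Fin 4) ℝ :=
  !![a, 0, 0, 0; 0, p ^ 2 + q ^ 2, 0, 0; 0, 0, p, -(a * q); 0, 0, q, a * p]

lemma toLin'_autoMat_apply (a p q : ℝ) (x : V4) :
    Matrix.toLin' (autoMat a p q) x =
      ![a * x 0, (p ^ 2 + q ^ 2) * x 1, p * x 2 - a * q * x 3, q * x 2 + a * p * x 3] := by
  funext i
  fin_cases i <;>
    simp [autoMat, Matrix.toLin'_apply, Matrix.mulVec, dotProduct, Fin.sum_univ_four]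
  all_goals ring

lemma autoMat_mul_autoMat_inv {a p q : ℝ} (ha : a ^ 2 = 1) (hpq : p ^ 2 + q ^ 2 ≠ 0) :
    autoMat a p q * autoMat a (p / (p ^ 2 + q ^ 2)) (-(a * q) / (p ^ 2 + q ^ 2)) = 1 := by
  ext i j
  fin_cases i <;> fin_cases j <;>
    simp [autoMat, Matrix.mul_apply, Fin.sum_univ_four] <;>
    field_simp <;> grind

lemma map_mem_span_pair_of_mem {R M : Type*} [Semiring R] [AddCommMonoid M] [Module R M]
    {A : M →ₗ[R] M} {u v : M}
    (hu : A u ∈ Submodule.span R {u, v}) (hv : A v ∈ Submodule.span R {u, v}) :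
    ∀ x ∈ Submodule.span R {u, v}, A x ∈ Submodule.span R {u, v} := by
  have : Submodule.span R {u, v} ≤ (Submodule.span R {u, v}).comap A :=
    Submodule.span_le.mpr (Set.insert_subset_iff.mpr ⟨hu, Set.singleton_subset_iff.mpr hv⟩)
  exact fun x hx => this hx

lemma isAuto_autoMat {a p q : ℝ} (ha : a ^ 2 = 1) (hpq : p ^ 2 + q ^ 2 ≠ 0) :
    IsAuto (Matrix.toLin' (autoMat a p q)) := by
  have hunit := IsUnit.of_mul_eq_one _ (autoMat_mul_autoMat_inv ha hpq)
  refine ⟨⟨Matrix.mulVec_injective_iff_isUnit.mpr hunit,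
    Matrix.mulVec_surjective_iff_isUnit.mpr hunit⟩, ?_, ?_, ?_⟩
  · refine map_mem_span_pair_of_mem (Submodule.mem_span_pair.mpr ⟨a, 0, ?_⟩)
      (Submodule.mem_span_pair.mpr ⟨0, p ^ 2 + q ^ 2, ?_⟩) <;>
    · rw [toLin'_autoMat_apply]; funext i; fin_cases i <;> simp [T]
  · refine map_mem_span_pair_of_mem (Submodule.mem_span_pair.mpr ⟨p, q, ?_⟩)
      (Submodule.mem_span_pair.mpr ⟨-(a * q), a * p, ?_⟩) <;>
    · rw [toLin'_autoMat_apply]; funext i; fin_cases i <;> simp [T]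
  · intro x y
    simp only [toLin'_autoMat_apply, brC5]
    funext i
    fin_cases i <;> simp <;> grind

lemma applyAA_toLin' (M r : Matrix (Fin 4) (Fin 4) ℝ) :
    applyAA (Matrix.toLin' M) r = M * r * M.transpose := by
  ext c d
  simp only [applyAA, Matrix.of_apply, Matrix.toLin'_apply, T, Matrix.mulVec_single,
    Matrix.mul_apply, Matrix.transpose_apply, Finset.sum_mul]
  rw [Finset.sum_comm]
  refine Finset.sum_congr rfl fun a _ => Finset.sum_congr rfl fun b _ => ?_
  simp only [MulOpposite.op_one, one_smul, Matrix.col_apply]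
  ring

lemma autoMat_mul_rmat_mul_transpose (a p q m₁ m₂ m₃ m₄ : ℝ) :
    autoMat a p q * rmat m₁ m₂ m₃ m₄ * (autoMat a p q).transpose =
      rmat (a * (p ^ 2 + q ^ 2) * m₁)
        (p * q * m₃ + a * (p ^ 2 - q ^ 2) * m₂ - a ^ 2 * p * q * m₄)
        (p ^ 2 * m₃ - 2 * a * p * q * m₂ + a ^ 2 * q ^ 2 * m₄)
        (q ^ 2 * m₃ + 2 * a * p * q * m₂ + a ^ 2 * p ^ 2 * m₄) := by
  ext i j
  fin_cases i <;> fin_cases j <;>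
    simp [autoMat, rmat, Matrix.mul_apply, Fin.sum_univ_four] <;> ring

lemma rEquiv_rmat_scale {a c : ℝ} (ha : a ^ 2 = 1) (hc : 0 < c) (m₁ m₂ m₃ m₄ : ℝ) :
    REquiv (rmat (a * c * m₁) (a * c * m₂) (c * m₃) (c * m₄)) (rmat m₁ m₂ m₃ m₄) := by
  have hp : √c ^ 2 = c := Real.sq_sqrt hc.le
  refine ⟨_, isAuto_autoMat (p := √c) (q := 0) ha (by simpa [hp] using hc.ne'), ?_⟩
  rw [applyAA_toLin', autoMat_mul_rmat_mul_transpose, hp, ha]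
  congr 1 <;> ring

lemma rEquiv_rmat_rotate {p q : ℝ} (hpq : p ^ 2 + q ^ 2 ≠ 0) :
    REquiv (rmat 0 (p ^ 2 - q ^ 2) (-(2 * p * q)) (2 * p * q)) (rmat 0 1 0 0) := by
  refine ⟨_, isAuto_autoMat (one_pow 2) hpq, ?_⟩
  rw [applyAA_toLin', autoMat_mul_rmat_mul_transpose]
  congr 1 <;> ring

lemma exists_sq_sub_sq_eq_and_two_mul_eq (u v : ℝ) :
    ∃ p q : ℝ, p ^ 2 - q ^ 2 = u ∧ 2 * p * q = v := by
  obtain ⟨z, hz⟩ := IsAlgClosed.exists_pow_nat_eq ((u : ℂ) + v * Complex.I) two_pos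
  refine ⟨z.re, z.im, ?_, ?_⟩
  · simpa [sq] using congrArg Complex.re hz
  · have h := congrArg Complex.im hz
    simp only [sq, Complex.mul_im, Complex.add_im, Complex.ofReal_im,
      Complex.ofReal_re, Complex.I_re, Complex.I_im] at h
    linear_combination h

lemma rmat_zero : rmat 0 0 0 0 = 0 := by
  ext i j
  fin_cases i <;> fin_cases j <;> simp [rmat]

lemma rEquiv_rv {m₂ m₃ : ℝ} (h : m₂ ≠ 0 ∨ m₃ ≠ 0) :
    REquiv (rmat 0 m₂ m₃ (-m₃)) (rmat 0 1 0 0) := by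
  obtain ⟨p, q, hu, hv⟩ := exists_sq_sub_sq_eq_and_two_mul_eq m₂ (-m₃)
  have hpq : p ^ 2 + q ^ 2 ≠ 0 := by
    intro h0
    have hp : p = 0 := by nlinarith
    have hq : q = 0 := by nlinarith
    subst hp hq
    rcases h with h | h <;> exact h (by linarith)
  simpa [hu, hv] using rEquiv_rmat_rotate hpq

lemma rEquiv_rii_or_riii {m : ℝ} (hm : m ≠ 0) :
    REquiv (rmat 0 0 m m) (rmat 0 0 1 1) ∨ REquiv (rmat 0 0 m m) (rmat 0 0 (-1) (-1)) := by
  rcases hm.lt_or_gt with hneg | hpos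
  · right
    simpa using rEquiv_rmat_scale (one_pow 2) (neg_pos.mpr hneg) 0 0 (-1) (-1)
  · left
    simpa using rEquiv_rmat_scale (one_pow 2) hpos 0 0 1 1

lemma rEquiv_riv {m₁ : ℝ} (hm₁ : m₁ ≠ 0) (m : ℝ) :
    REquiv (rmat m₁ 0 m m) (rmat 1 0 (m / |m₁|) (m / |m₁|)) := by
  have ha : (m₁ / |m₁|) ^ 2 = 1 := by
    rw [div_pow, sq_abs, div_self (pow_ne_zero 2 hm₁)]
  have habs : |m₁| ≠ 0 := abs_ne_zero.mpr hm₁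
  have h := rEquiv_rmat_scale ha (abs_pos.mpr hm₁) 1 0 (m / |m₁|) (m / |m₁|)
  rwa [mul_one, mul_zero, div_mul_cancel₀ _ habs, mul_div_cancel₀ _ habs] at h

/-- **Theorem 6.1 (existence part).** Fix `β ∈ ℝ`. Any nonzero r-matrix `r(m₁,m₂,m₃,m₄)` of
`(C⁵₀+A)` whose associated R-operator with respect to `Ω_β` satisfies the (modified) graded
classical Yang–Baxter equation with some parameter `ω` is equivalent to one of the five
representatives `r_i = r(1,0,0,0)`, `r_ii = r(0,0,1,1)`, `r_iii = r(0,0,−1,−1)`,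
`r_iv(p) = r(1,0,p,p)` for some `p ≠ 0`, or `r_v = r(0,1,0,0)`. -/
theorem rmatrix_classification_existence (β ω m₁ m₂ m₃ m₄ : ℝ)
    (hne : rmat m₁ m₂ m₃ m₄ ≠ 0)
    (hyb : SatGCYBE (Rop β m₁ m₂ m₃ m₄) ω) :
    REquiv (rmat m₁ m₂ m₃ m₄) (rmat 1 0 0 0) ∨
    REquiv (rmat m₁ m₂ m₃ m₄) (rmat 0 0 1 1) ∨
    REquiv (rmat m₁ m₂ m₃ m₄) (rmat 0 0 (-1) (-1)) ∨
    (∃ p : ℝ, p ≠ 0 ∧ REquiv (rmat m₁ m₂ m₃ m₄) (rmat 1 0 p p)) ∨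
    REquiv (rmat m₁ m₂ m₃ m₄) (rmat 0 1 0 0) := by
  obtain ⟨hE, hC⟩ := hyb.Rop_constraints
  rcases Rop_constraints_cases hE hC with ⟨rfl, rfl⟩ | ⟨rfl, rfl⟩
  · refine .inr <| .inr <| .inr <| .inr <| rEquiv_rv ?_
    contrapose! hne
    simp [hne, rmat_zero]
  · rcases eq_or_ne m₁ 0 with rfl | hm₁
    · have hm₄ : m₄ ≠ 0 := by rintro rfl; exact hne rmat_zero
      rcases rEquiv_rii_or_riii hm₄ with h | h
      exacts [.inr (.inl h), .inr (.inr (.inl h))]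
    · have h := rEquiv_riv hm₁ m₄
      rcases eq_or_ne m₄ 0 with rfl | hm₄
      · exact .inl (by simpa using h)
      · exact .inr <| .inr <| .inr <| .inl ⟨_, div_ne_zero hm₄ (abs_ne_zero.mpr hm₁), h⟩
end
end

section
/- The five representative r-matrices r_i, r_ii, r_iii, r_iv(p) (for any fixed p ≠ 0) and r_v are pairwise inequivalent: for any two distinct members r, r′ of this list there is no automorphism A of (C⁵₀+A) with (A⊗A)(r′) = r. (Theorem 6.1, inequivalence part.) -/
noncomputable section

/-! ### Auxiliary lemmas -/

lemma even_comp' {x : V4} (hx : x ∈ spanEven) : x 2 = 0 ∧ x 3 = 0 := by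
  induction hx using Submodule.span_induction with
  | mem y hy =>
    simp only [Set.mem_insert_iff, Set.mem_singleton_iff] at hy
    rcases hy with rfl | rfl <;> constructor <;> simp [T, Pi.single_apply]
  | zero => simp
  | add x y _ _ hx hy => exact ⟨by simp [hx.1, hy.1], by simp [hx.2, hy.2]⟩
  | smul c x _ hx => exact ⟨by simp [hx.1], by simp [hx.2]⟩

lemma odd_comp' {x : V4} (hx : x ∈ spanOdd) : x 0 = 0 ∧ x 1 = 0 := by
  induction hx using Submodule.span_induction with
  | mem y hy =>
    simp only [Set.mem_insert_iff, Set.mem_singleton_iff] at hy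
    rcases hy with rfl | rfl <;> constructor <;> simp [T, Pi.single_apply]
  | zero => simp
  | add x y _ _ hx hy => exact ⟨by simp [hx.1, hy.1], by simp [hx.2, hy.2]⟩
  | smul c x _ hx => exact ⟨by simp [hx.1], by simp [hx.2]⟩

lemma brT22 : brC5 (T 2) (T 2) = T 1 := by
  funext k; fin_cases k <;> simp [brC5, T, Pi.single_apply]
lemma brT02 : brC5 (T 0) (T 2) = -T 3 := by
  funext k; fin_cases k <;> simp [brC5, T, Pi.single_apply]
lemma brT03 : brC5 (T 0) (T 3) = T 2 := by
  funext k; fin_cases k <;> simp [brC5, T, Pi.single_apply]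

/-- Structure of the transformed coefficients under any automorphism. -/
lemma key {A : V4 →ₗ[ℝ] V4} (hA : IsAuto A) (n1 n2 n3 n4 t1 t2 t3 t4 : ℝ)
    (heq : applyAA A (rmat n1 n2 n3 n4) = rmat t1 t2 t3 t4) :
    ∃ a α β : ℝ, a ^ 2 = 1 ∧ 0 < α ^ 2 + β ^ 2 ∧
      t1 = n1 * a * (α ^ 2 + β ^ 2) ∧
      t2 = (n3 - n4) * (α * β) + n2 * a * (α ^ 2 - β ^ 2) ∧
      t3 = n3 * α ^ 2 - 2 * n2 * a * (α * β) + n4 * β ^ 2 ∧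
      t4 = n3 * β ^ 2 + 2 * n2 * a * (α * β) + n4 * α ^ 2 := by
  obtain ⟨hbij, hev, hodd, hbr⟩ := hA
  have hT0 : T 0 ∈ spanEven := Submodule.subset_span (by simp)
  have hT1 : T 1 ∈ spanEven := Submodule.subset_span (by simp)
  have hT2 : T 2 ∈ spanOdd := Submodule.subset_span (by simp)
  have hT3 : T 3 ∈ spanOdd := Submodule.subset_span (by simp)
  obtain ⟨e02, e03⟩ := even_comp' (hev _ hT0)
  obtain ⟨e12, e13⟩ := even_comp' (hev _ hT1)
  obtain ⟨o20, o21⟩ := odd_comp' (hodd _ hT2)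
  obtain ⟨o30, o31⟩ := odd_comp' (hodd _ hT3)
  have h22 := hbr (T 2) (T 2); rw [brT22] at h22
  have hc : A (T 1) 0 = 0 := by rw [h22]; simp [brC5]
  have hd : A (T 1) 1 = A (T 2) 2 * A (T 2) 2 + A (T 2) 3 * A (T 2) 3 := by
    rw [h22]; simp [brC5, o20, o30]
  have h02 := hbr (T 0) (T 2); rw [brT02, map_neg] at h02
  have hγ : A (T 3) 2 = -(A (T 0) 0 * A (T 2) 3) := by
    have := congrFun h02 2
    simp [brC5, e03, o20] at this
    linarith
  have hδ : A (T 3) 3 = A (T 0) 0 * A (T 2) 2 := by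
    have := congrFun h02 3
    simp [brC5, e02, o20] at this
    linarith
  have h03 := hbr (T 0) (T 3); rw [brT03] at h03
  have f2 : A (T 2) 2 = A (T 0) 0 * A (T 3) 3 := by
    have := congrFun h03 2
    simp [brC5, e03, o30] at this
    linarith
  have f3 : A (T 2) 3 = -(A (T 0) 0 * A (T 3) 2) := by
    have := congrFun h03 3
    simp [brC5, e02, o30] at this
    linarith
  have hne : A (T 2) 2 ≠ 0 ∨ A (T 2) 3 ≠ 0 := by
    by_contra hcon
    push_neg at hcon
    have hz : A (T 2) = 0 := by
      funext k; fin_cases k <;> simp [o20, o21, hcon.1, hcon.2]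
    have : T 2 = 0 := hbij.1 (by rw [hz, map_zero])
    have h2 : T 2 2 = 0 := by rw [this]; rfl
    simp [T, Pi.single_apply] at h2
  have ha2 : A (T 0) 0 ^ 2 = 1 := by
    rcases hne with h | h
    · have h5 : A (T 2) 2 * (A (T 0) 0 ^ 2 - 1) = 0 := by
        linear_combination (- A (T 0) 0) * hδ - f2
      rcases mul_eq_zero.mp h5 with h6 | h6
      · exact absurd h6 h
      · linarith
    · have h5 : A (T 2) 3 * (A (T 0) 0 ^ 2 - 1) = 0 := by
        linear_combination A (T 0) 0 * hγ - f3
      rcases mul_eq_zero.mp h5 with h6 | h6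
      · exact absurd h6 h
      · linarith
  have hpos : 0 < A (T 2) 2 ^ 2 + A (T 2) 3 ^ 2 := by
    rcases hne with h | h
    · nlinarith [sq_nonneg (A (T 2) 2), sq_nonneg (A (T 2) 3), mul_self_pos.mpr h]
    · nlinarith [sq_nonneg (A (T 2) 2), sq_nonneg (A (T 2) 3), mul_self_pos.mpr h]
  have hE := fun c d => congrFun (congrFun heq c) d
  have E01 := hE 0 1
  have E22 := hE 2 2
  have E33 := hE 3 3
  have E23 := hE 2 3
  simp only [applyAA, Matrix.of_apply, Fin.sum_univ_four, rmat] at E01 E22 E33 E23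
  simp [e02, e03, e12, e13, o20, o21, o30, o31, hc] at E01 E22 E33 E23
  refine ⟨A (T 0) 0, A (T 2) 2, A (T 2) 3, ha2, hpos, ?_⟩
  rw [hγ] at E22
  rw [hδ] at E33
  rw [hγ, hδ] at E23
  refine ⟨?_, ?_, ?_, ?_⟩
  · linear_combination -E01 + n1 * A (T 0) 0 * hd
  · linear_combination -E23 - n4 * (A (T 2) 2 * A (T 2) 3) * ha2
  · linear_combination -E22 + n4 * A (T 2) 3 ^ 2 * ha2
  · linear_combination -E33 + n4 * A (T 2) 2 ^ 2 * ha2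

/-- **Theorem 6.1 (inequivalence part).** For any fixed `p ≠ 0`, the five representative
r-matrices `r_i, r_ii, r_iii, r_iv(p), r_v` are pairwise inequivalent: for any two distinct
members `r, r′` of the list there is no automorphism `A` of `(C⁵₀+A)` with `(A⊗A)(r′) = r`. -/
theorem rmatrix_representatives_pairwise_inequivalent (p : ℝ) (hp : p ≠ 0) :
    ∀ i j : Fin 5, i ≠ j →
      ¬ REquiv
        (![rmat 1 0 0 0, rmat 0 0 1 1, rmat 0 0 (-1) (-1), rmat 1 0 p p, rmat 0 1 0 0] i)
        (![rmat 1 0 0 0, rmat 0 0 1 1, rmat 0 0 (-1) (-1), rmat 1 0 p p, rmat 0 1 0 0] j) := by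
  intro i j hij h
  obtain ⟨A, hA, heq⟩ := h
  fin_cases i <;> fin_cases j <;>
    simp only [Fin.isValue, Matrix.cons_val_zero, Matrix.cons_val_one, Matrix.head_cons,
      Matrix.cons_val_two, Matrix.tail_cons, Matrix.cons_val_three, Matrix.cons_val_four,
      Matrix.head_fin_const] at heq
  -- (0,0)
  · exact hij rfl
  -- (0,1)
  · obtain ⟨a, α, β, ha, hpos, h1, h2, h3, h4⟩ := key hA _ _ _ _ _ _ _ _ heq
    norm_num at h1
  -- (0,2)
  · obtain ⟨a, α, β, ha, hpos, h1, h2, h3, h4⟩ := key hA _ _ _ _ _ _ _ _ heq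
    norm_num at h1
  -- (0,3)
  · obtain ⟨a, α, β, ha, hpos, h1, h2, h3, h4⟩ := key hA _ _ _ _ _ _ _ _ heq
    have hps : p * (α ^ 2 + β ^ 2) = 0 := by linear_combination -h3
    rcases mul_eq_zero.mp hps with h | h
    · exact hp h
    · linarith
  -- (0,4)
  · obtain ⟨a, α, β, ha, hpos, h1, h2, h3, h4⟩ := key hA _ _ _ _ _ _ _ _ heq
    norm_num at h1
  -- (1,0)
  · obtain ⟨a, α, β, ha, hpos, h1, h2, h3, h4⟩ := key hA _ _ _ _ _ _ _ _ heq
    norm_num at h3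
  -- (1,1)
  · exact hij rfl
  -- (1,2)
  · obtain ⟨a, α, β, ha, hpos, h1, h2, h3, h4⟩ := key hA _ _ _ _ _ _ _ _ heq
    nlinarith [h3, h4, hpos]
  -- (1,3)
  · obtain ⟨a, α, β, ha, hpos, h1, h2, h3, h4⟩ := key hA _ _ _ _ _ _ _ _ heq
    have h0 : a * (α ^ 2 + β ^ 2) = 0 := by linear_combination -h1
    rcases mul_eq_zero.mp h0 with h | h
    · rw [h] at ha; norm_num at ha
    · linarith
  -- (1,4)
  · obtain ⟨a, α, β, ha, hpos, h1, h2, h3, h4⟩ := key hA _ _ _ _ _ _ _ _ heq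
    nlinarith [h3, h4]
  -- (2,0)
  · obtain ⟨a, α, β, ha, hpos, h1, h2, h3, h4⟩ := key hA _ _ _ _ _ _ _ _ heq
    norm_num at h3
  -- (2,1)
  · obtain ⟨a, α, β, ha, hpos, h1, h2, h3, h4⟩ := key hA _ _ _ _ _ _ _ _ heq
    nlinarith [h3, h4, hpos]
  -- (2,2)
  · exact hij rfl
  -- (2,3)
  · obtain ⟨a, α, β, ha, hpos, h1, h2, h3, h4⟩ := key hA _ _ _ _ _ _ _ _ heq
    have h0 : a * (α ^ 2 + β ^ 2) = 0 := by linear_combination -h1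
    rcases mul_eq_zero.mp h0 with h | h
    · rw [h] at ha; norm_num at ha
    · linarith
  -- (2,4)
  · obtain ⟨a, α, β, ha, hpos, h1, h2, h3, h4⟩ := key hA _ _ _ _ _ _ _ _ heq
    nlinarith [h3, h4]
  -- (3,0)
  · obtain ⟨a, α, β, ha, hpos, h1, h2, h3, h4⟩ := key hA _ _ _ _ _ _ _ _ heq
    norm_num at h3
    exact hp h3
  -- (3,1)
  · obtain ⟨a, α, β, ha, hpos, h1, h2, h3, h4⟩ := key hA _ _ _ _ _ _ _ _ heq
    norm_num at h1
  -- (3,2)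
  · obtain ⟨a, α, β, ha, hpos, h1, h2, h3, h4⟩ := key hA _ _ _ _ _ _ _ _ heq
    norm_num at h1
  -- (3,3)
  · exact hij rfl
  -- (3,4)
  · obtain ⟨a, α, β, ha, hpos, h1, h2, h3, h4⟩ := key hA _ _ _ _ _ _ _ _ heq
    norm_num at h1
  -- (4,0)
  · obtain ⟨a, α, β, ha, hpos, h1, h2, h3, h4⟩ := key hA _ _ _ _ _ _ _ _ heq
    norm_num at h2
  -- (4,1)
  · obtain ⟨a, α, β, ha, hpos, h1, h2, h3, h4⟩ := key hA _ _ _ _ _ _ _ _ heq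
    nlinarith [h3, h4, hpos]
  -- (4,2)
  · obtain ⟨a, α, β, ha, hpos, h1, h2, h3, h4⟩ := key hA _ _ _ _ _ _ _ _ heq
    nlinarith [h3, h4, hpos]
  -- (4,3)
  · obtain ⟨a, α, β, ha, hpos, h1, h2, h3, h4⟩ := key hA _ _ _ _ _ _ _ _ heq
    have h0 : a * (α ^ 2 + β ^ 2) = 0 := by linear_combination -h1
    rcases mul_eq_zero.mp h0 with h | h
    · rw [h] at ha; norm_num at ha
    · linarith
  -- (4,4)
  · exact hij rfl
end
end

section
/- With the above bracket on W = ℝ⁶: (i) the bracket satisfies the graded Jacobi identity [x,[y,z]] = [[x,y],z] + (−1)^{|x||y|}[y,[x,z]] for all parity-homogeneous x, y, z ∈ W, so W is a Lie superalgebra of superdimension (2|4); (ii) the subspaces span{T₁,T₂,T₃} and span{T̃¹,T̃²,T̃³} are closed under the bracket, realizing the Lie superalgebras (A₁,₁+2A)⁰ and C³ respectively; (iii) the bilinear form ⟨·,·⟩ on W determined by ⟨T₁,T̃¹⟩ = ⟨T̃¹,T₁⟩ = 1, ⟨T₂,T̃²⟩ = ⟨T₃,T̃³⟩ = −1, ⟨T̃²,T₂⟩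 = ⟨T̃³,T₃⟩ = 1, and all other values on basis vectors zero, is non-degenerate and invariant in the sense that ⟨[x,y],z⟩ = ⟨x,[y,z]⟩ for all x, y, z ∈ W, and both subspaces span{T₁,T₂,T₃} and span{T̃¹,T̃²,T̃³} are isotropic for ⟨·,·⟩. Hence W realizes the Drinfeld superdouble ((A₁,₁+2A)⁰, C³). -/
noncomputable section

/-- The underlying vector space `W = ℝ⁶` of the Drinfeld superdouble, with basis
`T₁ = S 0, T₂ = S 1, T₃ = S 2, T̃¹ = S 3, T̃² = S 4, T̃³ = S 5`; here `S 0` and `S 3` are even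
and `S 1, S 2, S 4, S 5` are odd. -/
abbrev W6 : Type := Fin 6 → ℝ

/-- The basis vectors of `W`. -/
def S (i : Fin 6) : W6 := Pi.single i 1

/-- The even subspace `span{T₁, T̃¹}`. -/
def evenW : Submodule ℝ W6 := Submodule.span ℝ {S 0, S 3}

/-- The odd subspace `span{T₂, T₃, T̃², T̃³}`. -/
def oddW : Submodule ℝ W6 := Submodule.span ℝ {S 1, S 2, S 4, S 5}

/-- The subspace `span{T₁,T₂,T₃}` (the Lie superalgebra `(A₁,₁+2A)⁰`). -/
def spanG : Submodule ℝ W6 := Submodule.span ℝ {S 0, S 1, S 2}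

/-- The subspace `span{T̃¹,T̃²,T̃³}` (the dual Lie superalgebra `C³`). -/
def spanGt : Submodule ℝ W6 := Submodule.span ℝ {S 3, S 4, S 5}

/-- The bilinear bracket of the Drinfeld superdouble `((A₁,₁+2A)⁰, C³)`, determined on basis
vectors by `[T₃,T₃] = (1/β)T₁`, `[T̃¹,T̃²] = (1/(2β))T̃³`, `[T̃²,T̃¹] = −(1/(2β))T̃³`,
`[T₃,T̃¹] = (1/(2β))T₂ − (1/β)T̃³`, `[T̃¹,T₃] = −(1/(2β))T₂ + (1/β)T̃³`,
`[T₃,T̃²] = [T̃²,T₃] = (1/(2β))T₁`, all other brackets of basis vectors zero. -/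
def brW (β : ℝ) (x y : W6) : W6 :=
  ![(1/β) * (x 2 * y 2) + (1/(2*β)) * (x 2 * y 4 + x 4 * y 2),
    (1/(2*β)) * (x 2 * y 3 - x 3 * y 2),
    0, 0, 0,
    (1/(2*β)) * (x 3 * y 4 - x 4 * y 3) - (1/β) * (x 2 * y 3 - x 3 * y 2)]

/-- The invariant bilinear form `⟨·,·⟩` on `W`, determined by `⟨T₁,T̃¹⟩ = ⟨T̃¹,T₁⟩ = 1`,
`⟨T₂,T̃²⟩ = ⟨T₃,T̃³⟩ = −1`, `⟨T̃²,T₂⟩ = ⟨T̃³,T₃⟩ = 1`, all other values on basis vectors zero. -/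
def pairW (x y : W6) : ℝ :=
  x 0 * y 3 + x 3 * y 0 - x 1 * y 4 + x 4 * y 1 - x 2 * y 5 + x 5 * y 2

/-! The bracket takes values in `span{T₁, T₂, T̃³}` and only sees the `T₃, T̃¹, T̃²` coordinates
of its arguments, so every iterated bracket vanishes and the graded Jacobi identity holds whatever
the parities. Invariance of the form is a polynomial identity in the coordinates, and the form
pairs coordinate `i` with coordinate `i + 3`, whence non-degeneracy. -/

lemma apply_eq_zero_of_mem_span {ι R : Type*} [Semiring R] {T : Set (ι → R)} {i : ι}
    (hT : ∀ v ∈ T, v i = 0) {x : ι → R} (hx : x ∈ Submodule.span R T) : x i = 0 :=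
  Submodule.span_le (p := LinearMap.ker (LinearMap.proj i)).2 hT hx

lemma apply_eq_zero_of_mem_spanG {x : W6} (hx : x ∈ spanG) : x 3 = 0 ∧ x 4 = 0 ∧ x 5 = 0 := by
  refine ⟨?_, ?_, ?_⟩ <;> refine apply_eq_zero_of_mem_span ?_ hx <;> simp [S]

lemma apply_eq_zero_of_mem_spanGt {x : W6} (hx : x ∈ spanGt) : x 0 = 0 ∧ x 1 = 0 ∧ x 2 = 0 := by
  refine ⟨?_, ?_, ?_⟩ <;> refine apply_eq_zero_of_mem_span ?_ hx <;> simp [S]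

section Bracket

variable (β : ℝ)

lemma brW_apply_two (x y : W6) : brW β x y 2 = 0 := rfl

lemma brW_apply_three (x y : W6) : brW β x y 3 = 0 := rfl

lemma brW_apply_four (x y : W6) : brW β x y 4 = 0 := rfl

lemma brW_eq_zero_of_left {x : W6} (y : W6) (h2 : x 2 = 0) (h3 : x 3 = 0) (h4 : x 4 = 0) :
    brW β x y = 0 := by
  funext i; fin_cases i <;> simp [brW, h2, h3, h4]

lemma brW_eq_zero_of_right (x : W6) {y : W6} (h2 : y 2 = 0) (h3 : y 3 = 0) (h4 : y 4 = 0) :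
    brW β x y = 0 := by
  funext i; fin_cases i <;> simp [brW, h2, h3, h4]

lemma brW_brW_left (x y z : W6) : brW β (brW β x y) z = 0 :=
  brW_eq_zero_of_left β z (brW_apply_two β x y) (brW_apply_three β x y) (brW_apply_four β x y)

lemma brW_brW_right (x y z : W6) : brW β x (brW β y z) = 0 :=
  brW_eq_zero_of_right β x (brW_apply_two β y z) (brW_apply_three β y z) (brW_apply_four β y z)

lemma brW_eq_smul_S_zero {x y : W6} (hx3 : x 3 = 0) (hx4 : x 4 = 0) (hy3 : y 3 = 0)
    (hy4 : y 4 = 0) : brW β x y = ((1/β) * (x 2 * y 2)) • S 0 := by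
  funext i; fin_cases i <;> simp [brW, S, hx3, hx4, hy3, hy4]

lemma brW_eq_smul_S_five {x y : W6} (hx2 : x 2 = 0) (hy2 : y 2 = 0) :
    brW β x y = ((1/(2*β)) * (x 3 * y 4 - x 4 * y 3)) • S 5 := by
  funext i; fin_cases i <;> simp [brW, S, hx2, hy2]

lemma brW_mem_spanG {x y : W6} (hx : x ∈ spanG) (hy : y ∈ spanG) : brW β x y ∈ spanG := by
  obtain ⟨hx3, hx4, -⟩ := apply_eq_zero_of_mem_spanG hx
  obtain ⟨hy3, hy4, -⟩ := apply_eq_zero_of_mem_spanG hy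
  rw [brW_eq_smul_S_zero β hx3 hx4 hy3 hy4]
  exact Submodule.smul_mem _ _ (Submodule.subset_span (by simp))

lemma brW_mem_spanGt {x y : W6} (hx : x ∈ spanGt) (hy : y ∈ spanGt) : brW β x y ∈ spanGt := by
  rw [brW_eq_smul_S_five β (apply_eq_zero_of_mem_spanGt hx).2.2
    (apply_eq_zero_of_mem_spanGt hy).2.2]
  exact Submodule.smul_mem _ _ (Submodule.subset_span (by simp))

lemma brW_S_two_S_two : brW β (S 2) (S 2) = (1/β) • S 0 := by
  simpa [S] using brW_eq_smul_S_zero β (x := S 2) (y := S 2)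
    (by simp [S]) (by simp [S]) (by simp [S]) (by simp [S])

lemma brW_S_three_S_four : brW β (S 3) (S 4) = (1/(2*β)) • S 5 := by
  simpa [S] using brW_eq_smul_S_five β (x := S 3) (y := S 4) (by simp [S]) (by simp [S])

lemma pairW_brW (x y z : W6) : pairW (brW β x y) z = pairW x (brW β y z) := by
  simp only [pairW, brW, Matrix.cons_val_zero, Matrix.cons_val_one, Matrix.cons_val]
  ring

end Bracket

lemma eq_zero_of_pairW_eq_zero (x : W6) (h : ∀ y, pairW x y = 0) : x = 0 := by
  have h0 := h (S 0); have h1 := h (S 1); have h2 := h (S 2)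
  have h3 := h (S 3); have h4 := h (S 4); have h5 := h (S 5)
  simp [pairW, S] at h0 h1 h2 h3 h4 h5
  funext i; fin_cases i <;> simp [*]

lemma pairW_eq_zero_of_mem_spanG {x y : W6} (hx : x ∈ spanG) (hy : y ∈ spanG) :
    pairW x y = 0 := by
  obtain ⟨hx3, hx4, hx5⟩ := apply_eq_zero_of_mem_spanG hx
  obtain ⟨hy3, hy4, hy5⟩ := apply_eq_zero_of_mem_spanG hy
  simp [pairW, hx3, hx4, hx5, hy3, hy4, hy5]

lemma pairW_eq_zero_of_mem_spanGt {x y : W6} (hx : x ∈ spanGt) (hy : y ∈ spanGt) :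
    pairW x y = 0 := by
  obtain ⟨hx0, hx1, hx2⟩ := apply_eq_zero_of_mem_spanGt hx
  obtain ⟨hy0, hy1, hy2⟩ := apply_eq_zero_of_mem_spanGt hy
  simp [pairW, hx0, hx1, hx2, hy0, hy1, hy2]

theorem drinfeld_superdouble_A112A0_C3_general (β : ℝ) :
    -- (i) graded Jacobi identity for parity-homogeneous elements
    (∀ (px py pz : Bool) (x y z : W6),
        x ∈ (if px then oddW else evenW) →
        y ∈ (if py then oddW else evenW) →
        z ∈ (if pz then oddW else evenW) →
        brW β x (brW β y z) =
          brW β (brW β x y) z + (if px && py then (-1 : ℝ) else 1) • brW β y (brW β x z)) ∧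
    -- (ii) the two halves are sub-superalgebras, realizing (A₁,₁+2A)⁰ and C³
    (∀ x ∈ spanG, ∀ y ∈ spanG, brW β x y ∈ spanG) ∧
    (∀ x ∈ spanGt, ∀ y ∈ spanGt, brW β x y ∈ spanGt) ∧
    brW β (S 2) (S 2) = (1/β) • S 0 ∧
    brW β (S 3) (S 4) = (1/(2*β)) • S 5 ∧
    -- (iii) the bilinear form is non-degenerate, invariant, and both halves are isotropic
    (∀ x : W6, (∀ y : W6, pairW x y = 0) → x = 0) ∧
    (∀ x y z : W6, pairW (brW β x y) z = pairW x (brW β y z)) ∧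
    (∀ x ∈ spanG, ∀ y ∈ spanG, pairW x y = 0) ∧
    (∀ x ∈ spanGt, ∀ y ∈ spanGt, pairW x y = 0) := by
  refine ⟨?jacobi, fun x hx y hy => brW_mem_spanG β hx hy, fun x hx y hy => brW_mem_spanGt β hx hy,
    brW_S_two_S_two β, brW_S_three_S_four β, eq_zero_of_pairW_eq_zero, pairW_brW β,
    fun x hx y hy => pairW_eq_zero_of_mem_spanG hx hy,
    fun x hx y hy => pairW_eq_zero_of_mem_spanGt hx hy⟩
  intro _ _ _ x y z _ _ _
  rw [brW_brW_right, brW_brW_left, brW_brW_right, smul_zero, add_zero]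

/-- **The Drinfeld superdouble `((A₁,₁+2A)⁰, C³)`.** For `β ≠ 0`:
(i) the bracket `brW β` satisfies the graded Jacobi identity
`[x,[y,z]] = [[x,y],z] + (−1)^{|x||y|}[y,[x,z]]` for all parity-homogeneous `x, y, z ∈ W`,
so `W` is a Lie superalgebra of superdimension `(2|4)`;
(ii) `span{T₁,T₂,T₃}` and `span{T̃¹,T̃²,T̃³}` are closed under the bracket, realizing
`(A₁,₁+2A)⁰` (with `[T₃,T₃] = (1/β)T₁`) and `C³` (with `[T̃¹,T̃²] = (1/(2β))T̃³`) respectively;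
(iii) the bilinear form `⟨·,·⟩` is non-degenerate, invariant (`⟨[x,y],z⟩ = ⟨x,[y,z]⟩`), and
both `span{T₁,T₂,T₃}` and `span{T̃¹,T̃²,T̃³}` are isotropic for it. -/
theorem drinfeld_superdouble_A112A0_C3 (β : ℝ) (hβ : β ≠ 0) :
    -- (i) graded Jacobi identity for parity-homogeneous elements
    (∀ (px py pz : Bool) (x y z : W6),
        x ∈ (if px then oddW else evenW) →
        y ∈ (if py then oddW else evenW) →
        z ∈ (if pz then oddW else evenW) →
        brW β x (brW β y z) =
          brW β (brW β x y) z + (if px && py then (-1 : ℝ) else 1) • brW β y (brW β x z)) ∧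
    -- (ii) the two halves are sub-superalgebras, realizing (A₁,₁+2A)⁰ and C³
    (∀ x ∈ spanG, ∀ y ∈ spanG, brW β x y ∈ spanG) ∧
    (∀ x ∈ spanGt, ∀ y ∈ spanGt, brW β x y ∈ spanGt) ∧
    brW β (S 2) (S 2) = (1/β) • S 0 ∧
    brW β (S 3) (S 4) = (1/(2*β)) • S 5 ∧
    -- (iii) the bilinear form is non-degenerate, invariant, and both halves are isotropic
    (∀ x : W6, (∀ y : W6, pairW x y = 0) → x = 0) ∧
    (∀ x y z : W6, pairW (brW β x y) z = pairW x (brW β y z)) ∧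
    (∀ x ∈ spanG, ∀ y ∈ spanG, pairW x y = 0) ∧
    (∀ x ∈ spanGt, ∀ y ∈ spanGt, pairW x y = 0) :=
  drinfeld_superdouble_A112A0_C3_general β
end
end

section
/- Let β, ω, η, Ã ∈ ℝ, let ε₁ ∈ {0,1} and ε₂ ∈ ℝ, and assume ε₁η² ≠ 1. Let R: V → V be the linear map with R(T₁) = ε₁T₁ − βε₁T₂, R(T₂) = −ε₁T₂, R(T₃) = ε₂T₄, R(T₄) = −ε₂T₃ (the R-operator of the r-matrix r(ε₁,0,ε₂,ε₂)), and write R_a{}^b for its matrix entries, R(T_a) = Σ_b R_a{}^b T_b. Set σ₁ = σ₂ = 1 and σ₃ = σ₄ = −1. Then for any L¹, L², L³, L⁴ ∈ ℝ, the unique solution (J¹, J², J³, J⁴) of the linear system J^a − η² Σ_{b,c} J^b R_b{}^c R_c{}^a = (1+ωη²)(L^a + Ã Σ_b σ_b L^b R_b{}^a), for a = 1, 2, 3, 4, is J¹ = (1+ωη²)(1+Ãε₁)/(1−ε₁η²) · L¹, J² = (1+ωη²)/(1−ε₁η²) · ((1−Ãε₁)L² − βÃε₁L¹), J³ = (1+ωη²)/(1+ε₂²η²)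 · (L³ + Ãε₂L⁴), J⁴ = (1+ωη²)/(1+ε₂²η²) · (L⁴ − Ãε₂L³). (This is the deformed-current relation of the Yang–Baxter deformation of the (C⁵₀+A) WZW model associated with the r-matrix r_{ε₁,ε₂}.) -/
set_option maxHeartbeats 1000000


noncomputable section

/-- The matrix entries `R_a{}^b` (with `R(T_a) = Σ_b R_a{}^b T_b`) of the R-operator of the
r-matrix `r(ε₁,0,ε₂,ε₂)`: `R(T₁) = ε₁T₁ − βε₁T₂`, `R(T₂) = −ε₁T₂`, `R(T₃) = ε₂T₄`,
`R(T₄) = −ε₂T₃`. -/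
def Rm (β ε₁ ε₂ : ℝ) : Matrix (Fin 4) (Fin 4) ℝ :=
  !![ε₁, -(β*ε₁), 0, 0; 0, -ε₁, 0, 0; 0, 0, 0, ε₂; 0, 0, -ε₂, 0]

/-- The grading signs `σ₁ = σ₂ = 1`, `σ₃ = σ₄ = −1`. -/
def sgn : Fin 4 → ℝ := ![1, 1, -1, -1]

/-- **Deformed currents of the Yang–Baxter deformation of the `(C⁵₀+A)` WZW model for the
r-matrix `r_{ε₁,ε₂} = r(ε₁,0,ε₂,ε₂)`.** Let `β, ω, η, Ã ∈ ℝ`, `ε₁ ∈ {0,1}`, `ε₂ ∈ ℝ`, with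
`ε₁η² ≠ 1`. Then for any `L¹,…,L⁴ ∈ ℝ` the unique solution `(J¹,…,J⁴)` of the linear system
`J^a − η² Σ_{b,c} J^b R_b{}^c R_c{}^a = (1+ωη²)(L^a + Ã Σ_b σ_b L^b R_b{}^a)` is
`J¹ = (1+ωη²)(1+Ãε₁)/(1−ε₁η²)·L¹`, `J² = (1+ωη²)/(1−ε₁η²)·((1−Ãε₁)L² − βÃε₁L¹)`,
`J³ = (1+ωη²)/(1+ε₂²η²)·(L³ + Ãε₂L⁴)`, `J⁴ = (1+ωη²)/(1+ε₂²η²)·(L⁴ − Ãε₂L³)`. -/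
theorem deformed_currents_r_eps (β ω η Atil ε₁ ε₂ : ℝ)
    (hε₁ : ε₁ = 0 ∨ ε₁ = 1) (hden : ε₁ * η ^ 2 ≠ 1) (L J : Fin 4 → ℝ) :
    (∀ a : Fin 4,
        J a - η ^ 2 * ∑ b : Fin 4, ∑ c : Fin 4, J b * Rm β ε₁ ε₂ b c * Rm β ε₁ ε₂ c a
          = (1 + ω * η ^ 2) * (L a + Atil * ∑ b : Fin 4, sgn b * L b * Rm β ε₁ ε₂ b a)) ↔
      (J 0 = (1 + ω * η ^ 2) * (1 + Atil * ε₁) / (1 - ε₁ * η ^ 2) * L 0 ∧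
       J 1 = (1 + ω * η ^ 2) / (1 - ε₁ * η ^ 2) *
               ((1 - Atil * ε₁) * L 1 - β * Atil * ε₁ * L 0) ∧
       J 2 = (1 + ω * η ^ 2) / (1 + ε₂ ^ 2 * η ^ 2) * (L 2 + Atil * ε₂ * L 3) ∧
       J 3 = (1 + ω * η ^ 2) / (1 + ε₂ ^ 2 * η ^ 2) * (L 3 - Atil * ε₂ * L 2)) := by
  have hd1 : (1 : ℝ) - ε₁ * η ^ 2 ≠ 0 := fun h => hden (by linarith [sub_eq_zero.mp h])
  have hd2 : (1 : ℝ) + ε₂ ^ 2 * η ^ 2 ≠ 0 := by positivity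
  constructor
  · intro h
    have h0 := h 0; have h1 := h 1; have h2 := h 2; have h3 := h 3
    simp [Rm, sgn, Fin.sum_univ_four, Matrix.vecHead, Matrix.vecTail] at h0 h1 h2 h3
    rcases hε₁ with h | h <;> subst h <;>
      refine ⟨?_, ?_, ?_, ?_⟩ <;> rw [div_mul_eq_mul_div, eq_div_iff (by assumption)] <;>
      first
        | linear_combination h0
        | linear_combination h1
        | linear_combination h2
        | linear_combination h3
  · rintro ⟨h0, h1, h2, h3⟩ a
    rcases hε₁ with hE | hE <;> subst hE
    · fin_cases a <;>
        simp [Rm, sgn, Fin.sum_univ_four, Matrix.vecHead, Matrix.vecTail] <;>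
        simp only [h0, h1, h2, h3] <;> norm_num <;> field_simp <;> ring
    · have hd1' : (1 : ℝ) - η ^ 2 ≠ 0 := fun hh => hden (by rw [one_mul]; linarith)
      fin_cases a <;>
        simp [Rm, sgn, Fin.sum_univ_four, Matrix.vecHead, Matrix.vecTail] <;>
        simp only [h0, h1, h2, h3] <;> norm_num <;> field_simp [hd1'] <;> ring
end
end
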